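/- arXiv:2204.08439 — 3 statements merged into one kernel-verified Lean document; each statement's English description precedes it below -/
import Mathlib

section
/- For all real numbers λ ≥ 0 and λ' ≥ 0, P_λ a-majorizes P_{λ'} if and only if λ ≥ λ'. Equivalently, the sequence P_λ * P_{−λ'} = P_{λ−λ'} is nonnegative at every integer if and only if λ ≥ λ'. -/
/-- Convolution of two sequences on `ℤ`: `(a*b)(n) = ∑_{k∈ℤ} a(k)·b(n−k)`.
For supported-below sequences this `tsum` has finitely many nonzero terms. -/
noncomputable def conv (a b : ℤ → ℝ) : ℤ → ℝ := fun n => ∑' k : ℤ, a k * b (n - k)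

/-- A sequence is supported below if it vanishes for all sufficiently negative indices. -/
def SuppBelow (a : ℤ → ℝ) : Prop := ∃ N : ℤ, ∀ n : ℤ, n < N → a n = 0

/-- A probability distribution on `ℤ`: nonnegative with total sum 1. -/
def IsProbDist (p : ℤ → ℝ) : Prop := (∀ n : ℤ, 0 ≤ p n) ∧ HasSum p 1

/-- `qt` is the reciprocal sequence `q̃` of `q`, relative to `nstar = n_*(q)`,
the least index where `q` is positive: `q̃` vanishes below `−n_*(q)` and
`(q̃*q)(n) = δ_{n,0}` for all `n`. -/
def IsRecip (q qt : ℤ → ℝ) (nstar : ℤ) : Prop :=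
  IsLeast {n : ℤ | 0 < q n} nstar ∧ (∀ n : ℤ, n < -nstar → qt n = 0) ∧
  (∀ n : ℤ, conv qt q n = if n = 0 then (1 : ℝ) else 0)

/-- The generalized Poisson sequence `P_λ : ℤ → ℝ`,
`P_λ(n) = e^{−λ}·λ^n/n!` for `n ≥ 0` and `P_λ(n) = 0` for `n < 0`. -/
noncomputable def poisson (lam : ℝ) : ℤ → ℝ :=
  fun n => if 0 ≤ n then Real.exp (-lam) * lam ^ n.toNat / (Nat.factorial n.toNat : ℝ) else 0

/-! The Poisson sequences form a one-parameter convolution group, `P_λ * P_μ = P_{λ+μ}`: on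
supports in `ℕ` the convolution is a Cauchy product, and the binomial theorem splits
`(λ+μ)^m/m!`. So `P_λ * P̃_{λ'} = P_{λ-λ'}`, and a generalized Poisson sequence `P_μ` is
nonnegative iff `μ ≥ 0`, as `P_μ(1) = e^{-μ} μ`. -/

open Finset Nat

lemma add_pow_div_factorial {K : Type*} [Field K] [CharZero K] (x y : K) (n : ℕ) :
    (x + y) ^ n / n ! = ∑ kl ∈ antidiagonal n, x ^ kl.1 / kl.1 ! * (y ^ kl.2 / kl.2 !) := by
  rw [(Commute.all x y).add_pow', sum_div]
  refine sum_congr rfl fun kl hkl => ?_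
  obtain rfl := mem_antidiagonal.mp hkl
  rw [nsmul_eq_mul, Nat.cast_add_choose]
  field_simp [Nat.factorial_ne_zero]

section Convolution

variable {a b : ℤ → ℝ}

lemma conv_apply_of_neg (ha : ∀ n < 0, a n = 0) (hb : ∀ n < 0, b n = 0) {n : ℤ} (hn : n < 0) :
    conv a b n = 0 := by
  refine (tsum_congr fun k => ?_).trans tsum_zero
  rcases lt_or_ge k 0 with hk | hk
  · rw [ha k hk, zero_mul]
  · rw [hb (n - k) (by omega), mul_zero]

lemma conv_apply_natCast (ha : ∀ n < 0, a n = 0) (hb : ∀ n < 0, b n = 0) (m : ℕ) :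
    conv a b m = ∑ kl ∈ antidiagonal m, a kl.1 * b kl.2 := by
  have hsupp : ∀ k ∉ (range (m + 1)).map Nat.castEmbedding, a k * b (m - k) = 0 := by
    intro k hk
    simp only [mem_map, mem_range, Nat.castEmbedding_apply, not_exists, not_and] at hk
    rcases lt_or_ge k 0 with hk0 | hk0
    · rw [ha k hk0, zero_mul]
    · have : m < k := by
        by_contra! h
        exact hk k.toNat (by omega) (by omega)
      rw [hb (m - k) (by omega), mul_zero]
  rw [conv, tsum_eq_sum hsupp, sum_map, Nat.sum_antidiagonal_eq_sum_range_succ fun i j => a i * b j]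
  refine sum_congr rfl fun k hk => ?_
  rw [Nat.castEmbedding_apply, Nat.cast_sub (by simpa [Nat.lt_succ_iff] using hk)]

end Convolution

lemma poisson_of_neg (lam : ℝ) {n : ℤ} (hn : n < 0) : poisson lam n = 0 :=
  if_neg hn.not_ge

lemma poisson_natCast (lam : ℝ) (m : ℕ) : poisson lam m = Real.exp (-lam) * lam ^ m / m ! := by
  simp [poisson]

lemma conv_poisson (lam mu : ℝ) : conv (poisson lam) (poisson mu) = poisson (lam + mu) := by
  funext n
  rcases lt_or_ge n 0 with hn | hn
  · rw [conv_apply_of_neg (fun _ => poisson_of_neg lam) (fun _ => poisson_of_neg mu) hn,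
      poisson_of_neg _ hn]
  · lift n to ℕ using hn
    rw [conv_apply_natCast (fun _ => poisson_of_neg lam) (fun _ => poisson_of_neg mu),
      poisson_natCast, neg_add, Real.exp_add, mul_div_assoc, add_pow_div_factorial,
      mul_sum]
    refine sum_congr rfl fun kl _ => ?_
    rw [poisson_natCast, poisson_natCast]
    ring

lemma poisson_nonneg_iff (lam : ℝ) : (∀ n, 0 ≤ poisson lam n) ↔ 0 ≤ lam := by
  refine ⟨fun h => ?_, fun h n => ?_⟩
  · have h1 := h ((1 : ℕ) : ℤ)
    rw [poisson_natCast, pow_one, Nat.factorial_one, Nat.cast_one, div_one] at h1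
    exact nonneg_of_mul_nonneg_right h1 (Real.exp_pos _)
  · unfold poisson
    split_ifs <;> positivity

theorem poisson_amaj_iff_general (lam lam' : ℝ) :
    ((∀ n : ℤ, 0 ≤ conv (poisson lam) (poisson (-lam')) n) ↔ lam' ≤ lam) ∧
    ((∀ n : ℤ, 0 ≤ poisson (lam - lam') n) ↔ lam' ≤ lam) := by
  have h : (∀ n : ℤ, 0 ≤ poisson (lam - lam') n) ↔ lam' ≤ lam := by
    rw [poisson_nonneg_iff, sub_nonneg]
  rw [conv_poisson, ← sub_eq_add_neg]
  exact ⟨h, h⟩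

/-- for `λ, λ' ≥ 0`, `P_λ` a-majorizes `P_{λ'}` iff `λ ≥ λ'`
(using `P̃_{λ'} = P_{−λ'}`); equivalently, the sequence
`P_λ * P_{−λ'} = P_{λ−λ'}` is nonnegative everywhere iff `λ ≥ λ'`. -/
theorem poisson_amaj_iff (lam lam' : ℝ) (hlam : 0 ≤ lam) (hlam' : 0 ≤ lam') :
    ((∀ n : ℤ, 0 ≤ conv (poisson lam) (poisson (-lam')) n) ↔ lam' ≤ lam) ∧
    ((∀ n : ℤ, 0 ≤ poisson (lam - lam') n) ↔ lam' ≤ lam) :=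
  poisson_amaj_iff_general lam lam'
end

section
/- Let p and q be supported-below probability distributions on ℤ such that (p*q̃)(k) ≥ 0 for every k ∈ ℤ. Then Σ_{k∈ℤ} (p*q̃)(k) = 1; that is, p*q̃ is itself a probability distribution on ℤ. -/
open scoped ENNReal


/-- support bound for convolution terms -/
lemma conv_eq_sum_of_subset (a b : ℤ → ℝ) (Na Nb : ℤ)
    (ha : ∀ m : ℤ, m < Na → a m = 0) (hb : ∀ m : ℤ, m < Nb → b m = 0)
    (n : ℤ) (s : Finset ℤ) (hs : ∀ k : ℤ, Na ≤ k → k ≤ n - Nb → k ∈ s) :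
    conv a b n = ∑ k ∈ s, a k * b (n - k) := by
  refine tsum_eq_sum (fun k hk => ?_)
  rcases lt_or_ge k Na with h | h
  · rw [ha k h, zero_mul]
  · rcases lt_or_ge (n - k) Nb with h2 | h2
    · rw [hb _ h2, mul_zero]
    · exact absurd (hs k h (by omega)) hk

/-- if `p, q` are supported-below probability distributions on `ℤ`
and `(p*q̃)(k) ≥ 0` for all `k`, then `∑_{k∈ℤ} (p*q̃)(k) = 1`, i.e. `p*q̃` is
itself a probability distribution on `ℤ`. -/
theorem conv_recip_probDist (p q qt : ℤ → ℝ) (nq : ℤ)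
    (hp : IsProbDist p) (hq : IsProbDist q)
    (hpb : SuppBelow p) (hqb : SuppBelow q)
    (hqt : IsRecip q qt nq)
    (hnonneg : ∀ k : ℤ, 0 ≤ conv p qt k) :
    HasSum (fun k : ℤ => conv p qt k) 1 ∧ IsProbDist (conv p qt) := by

  obtain ⟨Np, hNp⟩ := hpb
  obtain ⟨⟨hnq_pos, hnq_least⟩, hqt0, hconv⟩ := hqt
  set r : ℤ → ℝ := conv p qt with hr
  -- q vanishes below nq
  have hq0 : ∀ m : ℤ, m < nq → q m = 0 := by
    intro m hm
    by_contra h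
    exact absurd (hnq_least (lt_of_le_of_ne (hq.1 m) (Ne.symm h))) (by omega)
  have hqt0' : ∀ m : ℤ, m < -nq → qt m = 0 := hqt0
  -- key identity: (r * q) n = p n
  have hrsupp : ∀ m : ℤ, m < Np - nq → r m = 0 := by
    intro m hm
    rw [hr, conv_eq_sum_of_subset p qt Np (-nq) hNp hqt0' m ∅ (fun k h1 h2 => by omega)]
    simp
  have key : ∀ n : ℤ, (∑' j : ℤ, r j * q (n - j)) = p n := by
    intro n
    have step1 : (∑' j : ℤ, r j * q (n - j))
        = ∑ j ∈ Finset.Icc (Np - nq) (n - nq), r j * q (n - j) :=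
      conv_eq_sum_of_subset r q (Np - nq) nq hrsupp hq0 n _
        (fun k h1 h2 => Finset.mem_Icc.2 ⟨h1, h2⟩)
    rw [step1]
    have step2 : ∀ j ∈ Finset.Icc (Np - nq) (n - nq),
        r j * q (n - j) = ∑ k ∈ Finset.Icc Np n, p k * qt (j - k) * q (n - j) := by
      intro j hj
      rw [Finset.mem_Icc] at hj
      rw [hr, conv_eq_sum_of_subset p qt Np (-nq) hNp hqt0' j (Finset.Icc Np n)
        (fun k h1 h2 => Finset.mem_Icc.2 ⟨h1, by omega⟩), Finset.sum_mul]
    rw [Finset.sum_congr rfl step2, Finset.sum_comm]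
    have step3 : ∀ k ∈ Finset.Icc Np n,
        (∑ j ∈ Finset.Icc (Np - nq) (n - nq), p k * qt (j - k) * q (n - j))
        = p k * (if k = n then (1:ℝ) else 0) := by
      intro k hk
      rw [Finset.mem_Icc] at hk
      have inner : (∑ j ∈ Finset.Icc (Np - nq) (n - nq), qt (j - k) * q (n - j))
          = conv qt q (n - k) := by
        rw [conv]
        rw [← (Equiv.subRight k).tsum_eq (fun j => qt j * q (n - k - j))]
        simp only [Equiv.subRight_apply]
        have : ∀ j : ℤ, qt (j - k) * q (n - k - (j - k)) = qt (j - k) * q (n - j) := by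
          intro j; ring_nf
        rw [tsum_congr this]
        refine (tsum_eq_sum (fun j hj => ?_)).symm
        rcases lt_or_ge (j - k) (-nq) with h | h
        · rw [hqt0' _ h, zero_mul]
        · rcases lt_or_ge (n - j) nq with h2 | h2
          · rw [hq0 _ h2, mul_zero]
          · exact absurd (Finset.mem_Icc.2 ⟨by omega, by omega⟩) hj
      calc (∑ j ∈ Finset.Icc (Np - nq) (n - nq), p k * qt (j - k) * q (n - j))
          = p k * ∑ j ∈ Finset.Icc (Np - nq) (n - nq), qt (j - k) * q (n - j) := by
            rw [Finset.mul_sum]; exact Finset.sum_congr rfl (fun j _ => by ring)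
        _ = p k * (if k = n then (1:ℝ) else 0) := by
            rw [inner, hconv]
            congr 1
            by_cases h : k = n <;> simp [h, sub_eq_zero]
            omega
    rw [Finset.sum_congr rfl step3]
    rcases le_or_gt Np n with h | h
    · simp only [mul_ite, mul_one, mul_zero]
      rw [Finset.sum_ite_eq' (Finset.Icc Np n) n (fun k => p k)]
      simp [h]
    · rw [Finset.Icc_eq_empty (by omega), Finset.sum_empty, hNp n h]
  -- summability of the convolution terms
  have hsum_rq : ∀ n : ℤ, Summable (fun j : ℤ => r j * q (n - j)) := by
    intro n
    refine summable_of_ne_finset_zero (s := Finset.Icc (Np - nq) (n - nq)) (fun j hj => ?_)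
    rcases lt_or_ge j (Np - nq) with h | h
    · rw [hrsupp j h, zero_mul]
    · rcases lt_or_ge (n - j) nq with h2 | h2
      · rw [hq0 _ h2, mul_zero]
      · exact absurd (Finset.mem_Icc.2 ⟨h, by omega⟩) hj
  -- pass to ℝ≥0∞
  set R : ℤ → ℝ≥0∞ := fun n => ENNReal.ofReal (r n) with hR
  set Q : ℤ → ℝ≥0∞ := fun n => ENNReal.ofReal (q n) with hQ
  have hofp : ∀ n : ℤ, ENNReal.ofReal (p n) = ∑' j : ℤ, R j * Q (n - j) := by
    intro n
    rw [← key n, ENNReal.ofReal_tsum_of_nonneg (fun j => mul_nonneg (hnonneg j) (hq.1 _))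
      (hsum_rq n)]
    exact tsum_congr (fun j => ENNReal.ofReal_mul (hnonneg j))
  have hQsum : (∑' n : ℤ, Q n) = 1 := by
    rw [hQ, ← ENNReal.ofReal_tsum_of_nonneg hq.1 hq.2.summable, hq.2.tsum_eq,
      ENNReal.ofReal_one]
  have hPsum : (∑' n : ℤ, ENNReal.ofReal (p n)) = 1 := by
    rw [← ENNReal.ofReal_tsum_of_nonneg hp.1 hp.2.summable, hp.2.tsum_eq, ENNReal.ofReal_one]
  have hRsum : (∑' n : ℤ, R n) = 1 := by
    have : (∑' n : ℤ, ∑' j : ℤ, R j * Q (n - j)) = (∑' j : ℤ, R j) * ∑' m : ℤ, Q m := by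
      rw [ENNReal.tsum_comm]
      calc (∑' j : ℤ, ∑' n : ℤ, R j * Q (n - j))
          = ∑' j : ℤ, R j * ∑' n : ℤ, Q (n - j) := by
            exact tsum_congr (fun j => ENNReal.tsum_mul_left)
        _ = ∑' j : ℤ, R j * ∑' m : ℤ, Q m := by
            refine tsum_congr (fun j => ?_)
            exact congrArg (R j * ·) ((Equiv.subRight j).tsum_eq (fun m => Q m))
        _ = (∑' j : ℤ, R j) * ∑' m : ℤ, Q m := ENNReal.tsum_mul_right
    have h1 : (∑' n : ℤ, ENNReal.ofReal (p n)) = (∑' j : ℤ, R j) * ∑' m : ℤ, Q m := by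
      rw [← this]; exact tsum_congr hofp
    rw [hPsum, hQsum, mul_one] at h1
    exact h1.symm
  have hrsummable : Summable r := by
    have ht : (∑' n : ℤ, R n) ≠ ⊤ := by rw [hRsum]; exact ENNReal.one_ne_top
    have := ENNReal.summable_toReal ht
    refine this.congr (fun n => ?_)
    rw [hR]; exact ENNReal.toReal_ofReal (hnonneg n)
  have htsum : (∑' n : ℤ, r n) = 1 := by
    have h1 : ENNReal.ofReal (∑' n : ℤ, r n) = 1 := by
      rw [ENNReal.ofReal_tsum_of_nonneg hnonneg hrsummable]; exact hRsum
    have h2 := congrArg ENNReal.toReal h1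
    rwa [ENNReal.toReal_ofReal (tsum_nonneg hnonneg), ENNReal.toReal_one] at h2
  have hhs : HasSum r 1 := htsum ▸ hrsummable.hasSum
  exact ⟨hhs, hnonneg, hhs⟩
end

section
/- Let p and q be probability distributions on ℤ supported on the nonnegative integers. Then the following are equivalent: (i) there exists a probability distribution w on ℤ such that p(n) = Σ_{k∈ℤ} w(k)·q(n−k) for all n ∈ ℤ (i.e., p is a mixture of integer shifts Υ_k q of q); (ii) (p*q̃)(n) ≥ 0 for all n ∈ ℤ (i.e., p ≻_a q). -/
/-!
Supported-below sequences on `ℤ` are the coefficient sequences of Hahn series over `ℤ`, and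
`conv` is their multiplication; hence `conv` is associative there and `q̃` is a two-sided inverse
of `q`. If `p = w * q`, then `p * q̃ = w`, which is nonnegative. Conversely, `w := p * q̃`
satisfies `w * q = p`, and when `w ≥ 0` Tonelli's theorem gives `∑ w = ∑ p / ∑ q = 1`.
-/

noncomputable def SuppBelow.toHahnSeries {a : ℤ → ℝ} (ha : SuppBelow a) : HahnSeries ℤ ℝ where
  coeff := a
  isPWO_support' := by
    obtain ⟨N, hN⟩ := ha
    have : BddBelow (Function.support a) := ⟨N, fun n hn => not_lt.mp fun h => hn (hN n h)⟩
    exact Set.IsWF.isPWO this.wellFoundedOn_lt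

@[simp]
lemma SuppBelow.coeff_toHahnSeries {a : ℤ → ℝ} (ha : SuppBelow a) : ha.toHahnSeries.coeff = a :=
  rfl

lemma conv_coeff_coeff (A B : HahnSeries ℤ ℝ) : conv A.coeff B.coeff = (A * B).coeff := by
  funext n
  have hsnd : ∀ ij ∈ Finset.antidiagonal A.isPWO_support B.isPWO_support n, ij.2 = n - ij.1 :=
    fun ij hij => by
      rw [Finset.mem_antidiagonal] at hij
      omega
  rw [HahnSeries.coeff_mul, Finset.sum_congr rfl fun ij hij => by rw [hsnd ij hij],
    ← Finset.sum_image (f := fun k => A.coeff k * B.coeff (n - k))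
      fun x hx y hy hxy => Prod.ext hxy (by rw [hsnd x hx, hsnd y hy, hxy])]
  refine tsum_eq_sum fun k hk => ?_
  by_contra hne
  refine hk (Finset.mem_image.2 ⟨(k, n - k), ?_, rfl⟩)
  rw [Finset.mem_antidiagonal]
  exact ⟨left_ne_zero_of_mul hne, right_ne_zero_of_mul hne, by ring⟩

lemma conv_comm (a b : ℤ → ℝ) : conv a b = conv b a := by
  funext n
  rw [conv, conv, ← (Equiv.subLeft n).tsum_eq]
  simp [mul_comm]

lemma conv_assoc {a b c : ℤ → ℝ} (ha : SuppBelow a) (hb : SuppBelow b) (hc : SuppBelow c) :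
    conv (conv a b) c = conv a (conv b c) := by
  have := congrArg HahnSeries.coeff
    (mul_assoc ha.toHahnSeries hb.toHahnSeries hc.toHahnSeries)
  simpa only [← conv_coeff_coeff, SuppBelow.coeff_toHahnSeries] using this

lemma conv_delta (a : ℤ → ℝ) : conv a (fun n => if n = 0 then 1 else 0) = a := by
  funext n
  rw [conv, tsum_eq_single n fun k hk => by simp [sub_eq_zero, Ne.symm hk]]
  simp

lemma SuppBelow.conv {a b : ℤ → ℝ} (ha : SuppBelow a) (hb : SuppBelow b) :
    SuppBelow (conv a b) := by
  obtain ⟨N, hN⟩ := ha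
  obtain ⟨M, hM⟩ := hb
  refine ⟨N + M, fun n hn => ?_⟩
  refine (tsum_congr fun k => ?_).trans tsum_zero
  rcases lt_or_ge k N with hk | hk
  · rw [hN k hk, zero_mul]
  · rw [hM (n - k) (by omega), mul_zero]

lemma SuppBelow.summable_mul_sub {a b : ℤ → ℝ} (ha : SuppBelow a) (hb : SuppBelow b) (n : ℤ) :
    Summable fun k => a k * b (n - k) := by
  obtain ⟨N, hN⟩ := ha
  obtain ⟨M, hM⟩ := hb
  refine summable_of_ne_finset_zero (s := Finset.Icc N (n - M)) fun k hk => ?_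
  rw [Finset.mem_Icc, not_and_or, not_le, not_le] at hk
  rcases hk with hk | hk
  · rw [hN k hk, zero_mul]
  · rw [hM (n - k) (by omega), mul_zero]

lemma IsProbDist.le_one {q : ℤ → ℝ} (hq : IsProbDist q) (n : ℤ) : q n ≤ 1 :=
  le_hasSum hq.2 n fun m _ => hq.1 m

lemma IsProbDist.tsum_ofReal {q : ℤ → ℝ} (hq : IsProbDist q) :
    ∑' n, ENNReal.ofReal (q n) = 1 := by
  rw [← ENNReal.ofReal_tsum_of_nonneg hq.1 hq.2.summable, hq.2.tsum_eq, ENNReal.ofReal_one]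

lemma IsProbDist.mul_le_conv {w q : ℤ → ℝ} (hw : IsProbDist w) (hq : IsProbDist q) (k n : ℤ) :
    w k * q (n - k) ≤ conv w q n := by
  have hsum : Summable fun j => w j * q (n - j) :=
    hw.2.summable.of_nonneg_of_le (fun j => mul_nonneg (hw.1 j) (hq.1 _))
      fun j => mul_le_of_le_one_right (hw.1 j) (hq.le_one _)
  exact hsum.le_tsum k fun j _ => mul_nonneg (hw.1 j) (hq.1 _)

lemma IsProbDist.suppBelow_of_suppBelow_conv {w q : ℤ → ℝ} (hw : IsProbDist w)
    (hq : IsProbDist q) (hwq : SuppBelow (conv w q)) {m : ℤ} (hm : 0 < q m) : SuppBelow w := by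
  obtain ⟨N, hN⟩ := hwq
  refine ⟨N - m, fun k hk => le_antisymm (nonpos_of_mul_nonpos_left ?_ hm) (hw.1 k)⟩
  calc w k * q m = w k * q (k + m - k) := by rw [add_sub_cancel_left]
    _ ≤ conv w q (k + m) := hw.mul_le_conv hq k (k + m)
    _ = 0 := hN _ (by omega)

lemma tsum_ofReal_conv {w q : ℤ → ℝ} (hw : ∀ k, 0 ≤ w k) (hq : ∀ n, 0 ≤ q n)
    (hs : ∀ n, Summable fun k => w k * q (n - k)) :
    ∑' n, ENNReal.ofReal (conv w q n) =
      (∑' k, ENNReal.ofReal (w k)) * ∑' n, ENNReal.ofReal (q n) := by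
  calc ∑' n, ENNReal.ofReal (conv w q n)
      = ∑' n, ∑' k, ENNReal.ofReal (w k) * ENNReal.ofReal (q (n - k)) := by
        refine tsum_congr fun n => ?_
        rw [conv, ENNReal.ofReal_tsum_of_nonneg (fun k => mul_nonneg (hw k) (hq _)) (hs n)]
        simp only [ENNReal.ofReal_mul (hw _)]
    _ = ∑' k, ENNReal.ofReal (w k) * ∑' n, ENNReal.ofReal (q (n - k)) := by
        rw [ENNReal.tsum_comm]
        simp only [ENNReal.tsum_mul_left]
    _ = ∑' k, ENNReal.ofReal (w k) * ∑' n, ENNReal.ofReal (q n) :=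
        tsum_congr fun k => congrArg _ ((Equiv.subRight k).tsum_eq fun n => ENNReal.ofReal (q n))
    _ = _ := ENNReal.tsum_mul_right

lemma hasSum_one_of_hasSum_conv {w q : ℤ → ℝ} (hw : ∀ k, 0 ≤ w k) (hq : IsProbDist q)
    (hs : ∀ n, Summable fun k => w k * q (n - k)) (hwq : HasSum (conv w q) 1) :
    HasSum w 1 := by
  have hconv : ∀ n, 0 ≤ conv w q n := fun n => tsum_nonneg fun k => mul_nonneg (hw k) (hq.1 _)
  have hmass : ∑' k, ENNReal.ofReal (w k) = 1 := by
    have := tsum_ofReal_conv hw hq.1 hs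
    rwa [hq.tsum_ofReal, mul_one, ← ENNReal.ofReal_tsum_of_nonneg hconv hwq.summable,
      hwq.tsum_eq, ENNReal.ofReal_one, eq_comm] at this
  have hsum : Summable w := by
    refine (ENNReal.summable_toReal ?_).congr fun k => ENNReal.toReal_ofReal (hw k)
    exact hmass ▸ ENNReal.one_ne_top
  rw [← ENNReal.ofReal_tsum_of_nonneg hw hsum, ENNReal.ofReal_eq_one] at hmass
  exact hmass ▸ hsum.hasSum

/-- for probability distributions `p, q` supported on the
nonnegative integers, `p` is a mixture of integer shifts of `q` (i.e. there is
a probability distribution `w` on `ℤ` with `p(n) = ∑_k w(k)·q(n−k)`) if and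
only if `(p*q̃)(n) ≥ 0` for all `n`, i.e. `p ≻_a q`. -/
theorem mixture_iff_amaj (p q qt : ℤ → ℝ) (nq : ℤ)
    (hp : IsProbDist p) (hq : IsProbDist q)
    (hp0 : ∀ n : ℤ, n < 0 → p n = 0) (hq0 : ∀ n : ℤ, n < 0 → q n = 0)
    (hqt : IsRecip q qt nq) :
    (∃ w : ℤ → ℝ, IsProbDist w ∧ ∀ n : ℤ, p n = ∑' k : ℤ, w k * q (n - k)) ↔
      (∀ n : ℤ, 0 ≤ conv p qt n) := by
  obtain ⟨⟨hq_pos, -⟩, hqt0, hqt_q⟩ := hqt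
  have hpS : SuppBelow p := ⟨0, hp0⟩
  have hqS : SuppBelow q := ⟨0, hq0⟩
  have hqtS : SuppBelow qt := ⟨-nq, hqt0⟩
  have hq_qt : conv q qt = fun n => if n = 0 then 1 else 0 := by
    rw [conv_comm]
    exact funext hqt_q
  constructor
  · rintro ⟨w, hw, hpw⟩
    have hp_eq : p = conv w q := funext hpw
    have hwS : SuppBelow w := hw.suppBelow_of_suppBelow_conv hq (hp_eq ▸ hpS) hq_pos
    intro n
    rw [hp_eq, conv_assoc hwS hqS hqtS, hq_qt, conv_delta]
    exact hw.1 n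
  · intro hw
    have hp_eq : conv (conv p qt) q = p := by
      rw [conv_assoc hpS hqtS hqS, funext hqt_q, conv_delta]
    refine ⟨conv p qt, ⟨hw, ?_⟩, fun n => (congrFun hp_eq n).symm⟩
    refine hasSum_one_of_hasSum_conv hw hq ((hpS.conv hqtS).summable_mul_sub hqS) ?_
    rw [hp_eq]
    exact hp.2
end
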